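/- arXiv:2511.17534 — 3 statements merged into one kernel-verified Lean document; each statement's English description precedes it below -/
import Mathlib

section
/- Let ψ, ξ, χ : ℝ^{1+3} → ℝ be smooth and let Z be any one of the Lorentz vector fields ∂_μ (0 ≤ μ ≤ 3), Ω_{0k} = t∂_k + x_k∂_t, Ω_{ij} = x_i∂_j − x_j∂_i, or S = t∂_t + Σ_i x_i∂_i. Then Z[Q^{αβ}(ψ, Q_{αβ}(ξ,χ))] = Q^{αβ}(Zψ, Q_{αβ}(ξ,χ)) + Q^{αβ}(ψ, Q_{αβ}(Zξ, χ)) + Q^{αβ}(ψ, Q_{αβ}(ξ, Zχ)) + c·Q^{αβ}(ψ, Q_{αβ}(ξ,χ)), where c = −4 if Z = S and c = 0 for all the other fields. -/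
noncomputable section

open Real MeasureTheory

/-- Spacetime point in `ℝ^{1+3}`: coordinate `0` is the time `t`,
coordinates `i.succ` (for `i : Fin 3`) are the spatial coordinates `x_i`. -/
abbrev Pt := Fin 4 → ℝ

/-- A point of the initial slice `{t = 1} ≅ ℝ³`. -/
abbrev Sp := Fin 3 → ℝ

/-- The spacetime point with time `t` and space part `x`. -/
def mkPt (t : ℝ) (x : Sp) : Pt := Fin.cons t x

/-- Coordinate partial derivative `∂_μ`. -/
def pd (μ : Fin 4) (f : Pt → ℝ) : Pt → ℝ := fun p => fderiv ℝ f p (Pi.single μ 1)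

/-- Radial coordinate `r = |x|`. -/
def rr (p : Pt) : ℝ := Real.sqrt (∑ i : Fin 3, (p i.succ) ^ 2)

/-- `ω_i = x_i / r`. -/
def om (i : Fin 3) (p : Pt) : ℝ := p i.succ / rr p

/-- Radial derivative `∂_r = Σ_i ω_i ∂_i`. -/
def pdr (f : Pt → ℝ) : Pt → ℝ := fun p => ∑ i : Fin 3, om i p * pd i.succ f p

/-- Outgoing null derivative `L = ∂_t + ∂_r`. -/
def Lop (f : Pt → ℝ) : Pt → ℝ := fun p => pd 0 f p + pdr f p

/-- Incoming null derivative `L̲ = ∂_t - ∂_r`. -/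
def Lbop (f : Pt → ℝ) : Pt → ℝ := fun p => pd 0 f p - pdr f p

/-- Angular ("good") derivative `∂̄_i = ∂_i - ω_i ∂_r`. -/
def pbar (i : Fin 3) (f : Pt → ℝ) : Pt → ℝ := fun p => pd i.succ f p - om i p * pdr f p

/-- Null coordinate `u = (t - r)/2`. -/
def uuf (p : Pt) : ℝ := (p 0 - rr p) / 2

/-- Null coordinate `ū = (t + r)/2`. -/
def ubf (p : Pt) : ℝ := (p 0 + rr p) / 2

/-- `r = |x|` on the initial slice. -/
def rr3 (x : Sp) : ℝ := Real.sqrt (∑ i : Fin 3, (x i) ^ 2)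

/-- Minkowski signature sign `η^{μμ}` (`-1` for time, `+1` for space). -/
def eta : Fin 4 → ℝ := fun μ => if μ = 0 then -1 else 1

/-- Null form `Q(ξ,χ) = -∂_tξ ∂_tχ + Σ_i ∂_iξ ∂_iχ`. -/
def nullQ (ξ χ : Pt → ℝ) : Pt → ℝ :=
  fun p => -(pd 0 ξ p * pd 0 χ p) + ∑ i : Fin 3, pd i.succ ξ p * pd i.succ χ p

/-- Null form `Q_{αβ}(ξ,χ) = ∂_αξ ∂_βχ - ∂_βξ ∂_αχ`. -/
def Qdn (α β : Fin 4) (ξ χ : Pt → ℝ) : Pt → ℝ :=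
  fun p => pd α ξ p * pd β χ p - pd β ξ p * pd α χ p

/-- Raised-index null form `Q^{αβ}(ξ,χ) = ∂^αξ ∂^βχ - ∂^βξ ∂^αχ`. -/
def Qup (α β : Fin 4) (ξ χ : Pt → ℝ) : Pt → ℝ :=
  fun p => eta α * eta β * Qdn α β ξ χ p

/-- Double null form `Q^{αβ}(ψ, Q_{αβ}(ξ,χ))`, summed over `α, β`. -/
def dnull (ψ ξ χ : Pt → ℝ) : Pt → ℝ :=
  fun p => ∑ α : Fin 4, ∑ β : Fin 4,
    (eta α * pd α ψ p * (eta β * pd β (Qdn α β ξ χ) p)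
      - eta β * pd β ψ p * (eta α * pd α (Qdn α β ξ χ) p))

/-- Quadratic contraction `Q^{αβ}(ψ,ζ) · Q_{αβ}(ξ,χ)`, summed over `α, β`. -/
def QQgen (ψ ζ ξ χ : Pt → ℝ) : Pt → ℝ :=
  fun p => ∑ α : Fin 4, ∑ β : Fin 4, Qup α β ψ ζ p * Qdn α β ξ χ p

/-- Contraction `Q^{αβ}(θ,φ) Q_{αβ}(θ,φ)`. -/
def QQc (θ φ : Pt → ℝ) : Pt → ℝ := QQgen θ φ θ φ
/-- Lorentz boost `Ω_{0i} = t ∂_i + x_i ∂_t`. -/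
def boostOp (i : Fin 3) (f : Pt → ℝ) : Pt → ℝ :=
  fun p => p 0 * pd i.succ f p + p i.succ * pd 0 f p

/-- Rotation `Ω_{ij} = x_i ∂_j - x_j ∂_i`. -/
def rotOp (i j : Fin 3) (f : Pt → ℝ) : Pt → ℝ :=
  fun p => p i.succ * pd j.succ f p - p j.succ * pd i.succ f p

/-- Scaling field `S = t ∂_t + Σ_i x_i ∂_i`. -/
def scalOp (f : Pt → ℝ) : Pt → ℝ :=
  fun p => p 0 * pd 0 f p + ∑ i : Fin 3, p i.succ * pd i.succ f p

/-!
Each Lorentz field, and the scaling field, is an affine vector field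
`Z f = df(b + Aᵀx)`: translations have `A = 0`, boosts and rotations have `A` in the Lorentz
algebra (`ηA` antisymmetric), and `S` has `A = 1`. Such a field is a derivation with
`[∂_α, Z] = Σ_ν A_{αν} ∂_ν`, so pushing `Z` through the four derivatives of the double null form
leaves the correction `-2 Σ η^μ A_{μν} (T_{μν} + T_{νμ})` for an explicit tensor `T`. This vanishes
when `ηA` is antisymmetric, and for `A = 1` it is `-4` times the double null form because the
`η`-trace of `T` is the double null form itself.
-/

open scoped ContDiff

section DirectionalDerivative

variable {𝕜 E ι : Type*} [NontriviallyNormedField 𝕜] [NormedAddCommGroup E] [NormedSpace 𝕜 E]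
  {f g : E → 𝕜} {p v : E}

lemma fderiv_add_apply (hf : Differentiable 𝕜 f) (hg : Differentiable 𝕜 g) :
    fderiv 𝕜 (fun q => f q + g q) p v = fderiv 𝕜 f p v + fderiv 𝕜 g p v := by
  simp [fderiv_fun_add (hf p) (hg p)]

lemma fderiv_sub_apply (hf : Differentiable 𝕜 f) (hg : Differentiable 𝕜 g) :
    fderiv 𝕜 (fun q => f q - g q) p v = fderiv 𝕜 f p v - fderiv 𝕜 g p v := by
  simp [fderiv_fun_sub (hf p) (hg p)]

lemma fderiv_mul_apply (hf : Differentiable 𝕜 f) (hg : Differentiable 𝕜 g) :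
    fderiv 𝕜 (fun q => f q * g q) p v = fderiv 𝕜 f p v * g p + f p * fderiv 𝕜 g p v := by
  simp only [fderiv_fun_mul (hf p) (hg p), add_apply, smul_apply, smul_eq_mul]
  ring

lemma fderiv_const_mul_apply (hf : Differentiable 𝕜 f) (c : 𝕜) :
    fderiv 𝕜 (fun q => c * f q) p v = c * fderiv 𝕜 f p v := by
  simp [fderiv_const_mul (hf p)]

lemma fderiv_sum_apply (s : Finset ι) {F : ι → E → 𝕜} (hF : ∀ i, Differentiable 𝕜 (F i)) :
    fderiv 𝕜 (fun q => ∑ i ∈ s, F i q) p v = ∑ i ∈ s, fderiv 𝕜 (F i) p v := by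
  simp [fderiv_fun_sum fun i _ => hF i p]

end DirectionalDerivative

section CoordinateDerivatives

variable {f ξ χ : Pt → ℝ}

lemma pd_apply (μ : Fin 4) (f : Pt → ℝ) (p : Pt) : pd μ f p = fderiv ℝ f p (Pi.single μ 1) := rfl

@[fun_prop]
lemma contDiff_pd (hf : ContDiff ℝ ∞ f) (μ : Fin 4) : ContDiff ℝ ∞ (pd μ f) :=
  (hf.fderiv_right le_rfl).clm_apply contDiff_const

@[fun_prop]
lemma contDiff_Qdn (hξ : ContDiff ℝ ∞ ξ) (hχ : ContDiff ℝ ∞ χ) (α β : Fin 4) :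
    ContDiff ℝ ∞ (Qdn α β ξ χ) := by
  unfold Qdn
  fun_prop

lemma fderiv_apply_eq_sum_pd (f : Pt → ℝ) (p v : Pt) :
    fderiv ℝ f p v = ∑ ν, v ν * pd ν f p := by
  have hv : v = ∑ ν, v ν • Pi.single ν (1 : ℝ) := by
    ext i
    simp [Pi.single_apply]
  conv_lhs => rw [hv]
  simp [pd]

lemma fderiv_apply_single (f : Pt → ℝ) (p : Pt) (μ : Fin 4) (c : ℝ) :
    fderiv ℝ f p (Pi.single μ c) = c * pd μ f p := by
  simp [fderiv_apply_eq_sum_pd, Pi.single_apply]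

end CoordinateDerivatives

open Matrix

section AffineField

def affineField (A : Matrix (Fin 4) (Fin 4) ℝ) (b : Pt) (f : Pt → ℝ) : Pt → ℝ :=
  fun p => fderiv ℝ f p (b + p ᵥ* A)

variable {A : Matrix (Fin 4) (Fin 4) ℝ} {b : Pt} {f ξ χ : Pt → ℝ}

lemma affineField_apply (A : Matrix (Fin 4) (Fin 4) ℝ) (b : Pt) (f : Pt → ℝ) (p : Pt) :
    affineField A b f p = fderiv ℝ f p (b + p ᵥ* A) := rfl

lemma hasFDerivAt_add_vecMul (A : Matrix (Fin 4) (Fin 4) ℝ) (b p : Pt) :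
    HasFDerivAt (fun q : Pt => b + q ᵥ* A) (LinearMap.toContinuousLinearMap A.vecMulLinear) p :=
  (LinearMap.toContinuousLinearMap A.vecMulLinear).hasFDerivAt.const_add b

@[fun_prop]
lemma contDiff_affineField (hf : ContDiff ℝ ∞ f) : ContDiff ℝ ∞ (affineField A b f) :=
  (hf.fderiv_right le_rfl).clm_apply
    (contDiff_const.add (LinearMap.toContinuousLinearMap A.vecMulLinear).contDiff)

lemma affineField_pd (hf : ContDiff ℝ ∞ f) (α : Fin 4) (p : Pt) :
    affineField A b (pd α f) p = pd α (affineField A b f) p - ∑ ν, A α ν * pd ν f p := by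
  have hd : Differentiable ℝ (fderiv ℝ f) :=
    (hf.fderiv_right (m := ∞) le_rfl).differentiable (by simp)
  have hsymm := (hf.contDiffAt (x := p)).isSymmSndFDerivAt
    (by simp only [minSmoothness_of_isRCLikeNormedField]; exact WithTop.coe_le_coe.2 le_top)
  show fderiv ℝ (fun q => fderiv ℝ f q (Pi.single α 1)) p (b + p ᵥ* A)
    = fderiv ℝ (fun q => fderiv ℝ f q (b + q ᵥ* A)) p (Pi.single α 1) - _
  rw [fderiv_clm_apply (hd p) (hasFDerivAt_add_vecMul A b p).differentiableAt,
    fderiv_clm_apply (hd p) (differentiableAt_const _), (hasFDerivAt_add_vecMul A b p).fderiv]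
  simp only [_root_.add_apply, ContinuousLinearMap.comp_apply,
    ContinuousLinearMap.flip_apply, LinearMap.coe_toContinuousLinearMap', Matrix.vecMulLinear_apply,
    single_one_vecMul, hsymm.eq, fderiv_apply_eq_sum_pd f p (A.row α)]
  simp [Matrix.row]

lemma affineField_Qdn (hξ : ContDiff ℝ ∞ ξ) (hχ : ContDiff ℝ ∞ χ) (α β : Fin 4) :
    affineField A b (Qdn α β ξ χ) = fun q =>
      Qdn α β (affineField A b ξ) χ q + Qdn α β ξ (affineField A b χ) q
        - ∑ ν, (A α ν * Qdn ν β ξ χ q + A β ν * Qdn α ν ξ χ q) := by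
  funext q
  rw [affineField_apply]
  unfold Qdn
  simp (disch := fun_prop (disch := simp)) only [fderiv_sub_apply, fderiv_mul_apply]
  simp only [← affineField_apply, affineField_pd hξ, affineField_pd hχ, Fin.sum_univ_four]
  ring

lemma affineField_pd_Qdn (hξ : ContDiff ℝ ∞ ξ) (hχ : ContDiff ℝ ∞ χ) (α β γ : Fin 4) (p : Pt) :
    affineField A b (pd γ (Qdn α β ξ χ)) p =
      pd γ (Qdn α β (affineField A b ξ) χ) p + pd γ (Qdn α β ξ (affineField A b χ)) p
        - ∑ ν, (A α ν * pd γ (Qdn ν β ξ χ) p + A β ν * pd γ (Qdn α ν ξ χ) p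
          + A γ ν * pd ν (Qdn α β ξ χ) p) := by
  rw [affineField_pd (contDiff_Qdn hξ hχ α β), affineField_Qdn hξ hχ, pd_apply γ (fun q => _ - _)]
  simp (disch := intros; fun_prop (disch := simp)) only [fderiv_sub_apply, fderiv_add_apply,
    fderiv_sum_apply, fderiv_const_mul_apply]
  simp only [← pd_apply, Finset.sum_add_distrib]
  ring

end AffineField

section DoubleNullForm

variable {ψ ξ χ : Pt → ℝ}

def dnullHalf (ψ ξ χ : Pt → ℝ) : Pt → ℝ :=
  fun p => ∑ α, ∑ β, eta α * eta β * pd α ψ p * pd β (Qdn α β ξ χ) p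

def dnullStress (ψ ξ χ : Pt → ℝ) (μ ν : Fin 4) (p : Pt) : ℝ :=
  ∑ β, eta β * pd μ ψ p * pd β (Qdn ν β ξ χ) p + ∑ α, eta α * pd α ψ p * pd μ (Qdn α ν ξ χ) p

def dnullCorrection (A : Matrix (Fin 4) (Fin 4) ℝ) (ψ ξ χ : Pt → ℝ) (p : Pt) : ℝ :=
  ∑ μ, ∑ ν, eta μ * A μ ν * (dnullStress ψ ξ χ μ ν p + dnullStress ψ ξ χ ν μ p)

lemma dnull_eq_two_mul_dnullHalf (ψ ξ χ : Pt → ℝ) :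
    dnull ψ ξ χ = fun p => 2 * dnullHalf ψ ξ χ p := by
  funext p
  have hswap : ∀ α β, pd α (Qdn β α ξ χ) p = -pd α (Qdn α β ξ χ) p := fun α β => by
    have : Qdn β α ξ χ = fun q => -Qdn α β ξ χ q := by
      funext q
      simp only [Qdn]
      ring
    rw [this, pd_apply, fderiv_fun_neg, pd_apply]
    rfl
  simp only [dnull, dnullHalf, Finset.sum_sub_distrib, Finset.mul_sum]
  rw [Finset.sum_comm (f := fun α β => eta β * pd β ψ p * (eta α * pd α (Qdn α β ξ χ) p))]
  simp only [hswap, ← Finset.sum_sub_distrib]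
  exact Finset.sum_congr rfl fun α _ => Finset.sum_congr rfl fun β _ => by ring

lemma dnullCorrection_eq (A : Matrix (Fin 4) (Fin 4) ℝ) (p : Pt) :
    dnullCorrection A ψ ξ χ p =
      ∑ α, ∑ β, eta α * eta β * ((∑ ν, A α ν * pd ν ψ p) * pd β (Qdn α β ξ χ) p
        + pd α ψ p * ∑ ν, (A α ν * pd β (Qdn ν β ξ χ) p + A β ν * pd β (Qdn α ν ξ χ) p
          + A β ν * pd ν (Qdn α β ξ χ) p)) := by
  simp only [dnullCorrection, dnullStress, Fin.sum_univ_four]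
  ring

lemma affineField_dnullHalf (hψ : ContDiff ℝ ∞ ψ) (hξ : ContDiff ℝ ∞ ξ) (hχ : ContDiff ℝ ∞ χ)
    (A : Matrix (Fin 4) (Fin 4) ℝ) (b p : Pt) :
    affineField A b (dnullHalf ψ ξ χ) p =
      dnullHalf (affineField A b ψ) ξ χ p + dnullHalf ψ (affineField A b ξ) χ p
        + dnullHalf ψ ξ (affineField A b χ) p - dnullCorrection A ψ ξ χ p := by
  rw [affineField_apply, dnullCorrection_eq]
  unfold dnullHalf
  simp (disch := intros; fun_prop (disch := simp)) only [fderiv_sum_apply, fderiv_mul_apply,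
    fderiv_const_apply, _root_.zero_apply, zero_mul, zero_add]
  simp only [← affineField_apply, affineField_pd hψ, affineField_pd_Qdn hξ hχ,
    ← Finset.sum_add_distrib, ← Finset.sum_sub_distrib]
  exact Finset.sum_congr rfl fun α _ => Finset.sum_congr rfl fun β _ => by ring

theorem affineField_dnull (hψ : ContDiff ℝ ∞ ψ) (hξ : ContDiff ℝ ∞ ξ) (hχ : ContDiff ℝ ∞ χ)
    (A : Matrix (Fin 4) (Fin 4) ℝ) (b p : Pt) :
    affineField A b (dnull ψ ξ χ) p =
      dnull (affineField A b ψ) ξ χ p + dnull ψ (affineField A b ξ) χ p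
        + dnull ψ ξ (affineField A b χ) p - 2 * dnullCorrection A ψ ξ χ p := by
  have hF : Differentiable ℝ (dnullHalf ψ ξ χ) := by
    unfold dnullHalf
    fun_prop (disch := simp)
  simp only [dnull_eq_two_mul_dnullHalf]
  rw [affineField_apply, fderiv_const_mul_apply hF, ← affineField_apply,
    affineField_dnullHalf hψ hξ hχ]
  ring

lemma sum_mul_add_swap_eq_zero {ι R : Type*} [Fintype ι] [CommRing R] {B K : ι → ι → R}
    (hB : ∀ μ ν, B ν μ = -B μ ν) :
    ∑ μ, ∑ ν, B μ ν * (K μ ν + K ν μ) = 0 := by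
  have hswap : ∑ μ, ∑ ν, B μ ν * K ν μ = -∑ μ, ∑ ν, B μ ν * K μ ν := by
    rw [Finset.sum_comm, ← Finset.sum_neg_distrib]
    refine Finset.sum_congr rfl fun μ _ => ?_
    rw [← Finset.sum_neg_distrib]
    exact Finset.sum_congr rfl fun ν _ => by rw [hB]; ring
  simp only [mul_add, Finset.sum_add_distrib, hswap, add_neg_cancel]

lemma dnullCorrection_eq_zero_of_isSkewAdjoint {A : Matrix (Fin 4) (Fin 4) ℝ}
    (hA : (diagonal eta).IsSkewAdjoint A) (p : Pt) :
    dnullCorrection A ψ ξ χ p = 0 :=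
  sum_mul_add_swap_eq_zero fun μ ν => by
    simpa [Matrix.mul_diagonal, Matrix.diagonal_mul, mul_comm]
      using congrArg (fun M : Matrix (Fin 4) (Fin 4) ℝ => M μ ν) hA

lemma sum_eta_mul_dnullStress_self (p : Pt) :
    ∑ μ, eta μ * dnullStress ψ ξ χ μ μ p = dnull ψ ξ χ p := by
  simp only [dnull_eq_two_mul_dnullHalf, dnullStress, dnullHalf, mul_add, Finset.mul_sum,
    Finset.sum_add_distrib, two_mul]
  rw [Finset.sum_comm (f := fun μ α => eta μ * (eta α * pd α ψ p * pd μ (Qdn α μ ξ χ) p))]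
  congr 1 <;> exact Finset.sum_congr rfl fun α _ => Finset.sum_congr rfl fun β _ => by ring

lemma dnullCorrection_one (p : Pt) : dnullCorrection 1 ψ ξ χ p = 2 * dnull ψ ξ χ p := by
  simp only [dnullCorrection, Matrix.one_apply, mul_ite, mul_one, mul_zero, ite_mul, zero_mul,
    Finset.sum_ite_eq, Finset.mem_univ, if_true, ← two_mul, mul_left_comm _ (2 : ℝ),
    ← Finset.mul_sum, sum_eta_mul_dnullStress_self]

theorem affineField_dnull_of_isSkewAdjoint (hψ : ContDiff ℝ ∞ ψ) (hξ : ContDiff ℝ ∞ ξ)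
    (hχ : ContDiff ℝ ∞ χ) {A : Matrix (Fin 4) (Fin 4) ℝ} (hA : (diagonal eta).IsSkewAdjoint A)
    (b p : Pt) :
    affineField A b (dnull ψ ξ χ) p =
      dnull (affineField A b ψ) ξ χ p + dnull ψ (affineField A b ξ) χ p
        + dnull ψ ξ (affineField A b χ) p := by
  rw [affineField_dnull hψ hξ hχ, dnullCorrection_eq_zero_of_isSkewAdjoint hA, mul_zero, sub_zero]

theorem affineField_one_dnull (hψ : ContDiff ℝ ∞ ψ) (hξ : ContDiff ℝ ∞ ξ)
    (hχ : ContDiff ℝ ∞ χ) (b p : Pt) :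
    affineField 1 b (dnull ψ ξ χ) p =
      dnull (affineField 1 b ψ) ξ χ p + dnull ψ (affineField 1 b ξ) χ p
        + dnull ψ ξ (affineField 1 b χ) p + (-4) * dnull ψ ξ χ p := by
  rw [affineField_dnull hψ hξ hχ, dnullCorrection_one]
  ring

end DoubleNullForm

section LorentzFields

def boostGenerator (k : Fin 3) : Matrix (Fin 4) (Fin 4) ℝ :=
  Matrix.single 0 k.succ 1 + Matrix.single k.succ 0 1

def rotationGenerator (i j : Fin 3) : Matrix (Fin 4) (Fin 4) ℝ :=
  Matrix.single i.succ j.succ 1 - Matrix.single j.succ i.succ 1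

lemma isSkewAdjoint_boostGenerator (k : Fin 3) :
    (diagonal eta).IsSkewAdjoint (boostGenerator k) := by
  ext μ ν
  fin_cases k <;> fin_cases μ <;> fin_cases ν <;> simp [boostGenerator, eta]

lemma isSkewAdjoint_rotationGenerator (i j : Fin 3) :
    (diagonal eta).IsSkewAdjoint (rotationGenerator i j) := by
  ext μ ν
  fin_cases i <;> fin_cases j <;> fin_cases μ <;> fin_cases ν <;> simp [rotationGenerator, eta]

lemma vecMul_single_one {m n R : Type*} [Fintype m] [DecidableEq m] [DecidableEq n]
    [NonAssocSemiring R] (v : m → R) (i : m) (j : n) :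
    v ᵥ* Matrix.single i j 1 = Pi.single j (v i) := by
  ext κ
  simp [vecMul, dotProduct, Matrix.single_apply, Pi.single_apply, ite_and, eq_comm]

lemma pd_eq_affineField (μ : Fin 4) : pd μ = affineField 0 (Pi.single μ 1) := by
  funext f p
  simp [affineField, pd]

lemma boostOp_eq_affineField (k : Fin 3) : boostOp k = affineField (boostGenerator k) 0 := by
  funext f p
  simp [affineField, boostOp, boostGenerator, Matrix.vecMul_add, vecMul_single_one,
    fderiv_apply_single]

lemma rotOp_eq_affineField (i j : Fin 3) :
    rotOp i j = affineField (rotationGenerator i j) 0 := by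
  funext f p
  simp [affineField, rotOp, rotationGenerator, Matrix.vecMul_sub, vecMul_single_one,
    fderiv_apply_single]

lemma scalOp_eq_affineField : scalOp = affineField 1 0 := by
  funext f p
  simp [affineField, scalOp, fderiv_apply_eq_sum_pd, Fin.sum_univ_succ]

end LorentzFields

/-- commutation of the Lorentz vector fields with the double null
form `Q^{αβ}(ψ, Q_{αβ}(ξ,χ))`: the Leibniz rule holds exactly for `∂_μ`, the
boosts and the rotations, and up to `-4` times the double null form for `S`. -/
theorem double_null_form_commutes_with_lorentz_fields
    (ψ ξ χ : Pt → ℝ) (hψ : ContDiff ℝ (⊤:ℕ∞) ψ)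
    (hξ : ContDiff ℝ (⊤:ℕ∞) ξ) (hχ : ContDiff ℝ (⊤:ℕ∞) χ) :
    (∀ μ : Fin 4, ∀ p : Pt,
      pd μ (dnull ψ ξ χ) p
        = dnull (pd μ ψ) ξ χ p + dnull ψ (pd μ ξ) χ p + dnull ψ ξ (pd μ χ) p) ∧
    (∀ k : Fin 3, ∀ p : Pt,
      boostOp k (dnull ψ ξ χ) p
        = dnull (boostOp k ψ) ξ χ p + dnull ψ (boostOp k ξ) χ p
          + dnull ψ ξ (boostOp k χ) p) ∧
    (∀ i j : Fin 3, ∀ p : Pt,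
      rotOp i j (dnull ψ ξ χ) p
        = dnull (rotOp i j ψ) ξ χ p + dnull ψ (rotOp i j ξ) χ p
          + dnull ψ ξ (rotOp i j χ) p) ∧
    (∀ p : Pt,
      scalOp (dnull ψ ξ χ) p
        = dnull (scalOp ψ) ξ χ p + dnull ψ (scalOp ξ) χ p + dnull ψ ξ (scalOp χ) p
          + (-4) * dnull ψ ξ χ p) := by
  refine ⟨fun μ p => ?_, fun k p => ?_, fun i j p => ?_, fun p => ?_⟩
  · rw [pd_eq_affineField]
    exact affineField_dnull_of_isSkewAdjoint hψ hξ hχ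
      (by simp [Matrix.IsSkewAdjoint, Matrix.IsAdjointPair]) _ p
  · rw [boostOp_eq_affineField]
    exact affineField_dnull_of_isSkewAdjoint hψ hξ hχ (isSkewAdjoint_boostGenerator k) 0 p
  · rw [rotOp_eq_affineField]
    exact affineField_dnull_of_isSkewAdjoint hψ hξ hχ (isSkewAdjoint_rotationGenerator i j) 0 p
  · rw [scalOp_eq_affineField]
    exact affineField_one_dnull hψ hξ hχ 0 p
end
end

section
/- Let δ ∈ (0, 1/2), M ≥ 1 and C₀ ≥ 0, and set u = (t−|x|)/2 and ū = (t+|x|)/2. Let ψ be a C¹ function on the region R = {(t,x) ∈ ℝ × ℝ³ : t ≥ 1, 0 ≤ u ≤ δ} such that ψ = 0 on {u = 0} ∩ R, |ψ| ≤ C₀δ on {t = 1} ∩ R, and |L̲ψ| ≤ M/ū at every point of R. Then there is a constant C depending only on C₀ such that |ψ| ≤ C·δ·M/ū throughout R. -/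
noncomputable section

open Real MeasureTheory

/-- The short-pulse region II `= {t ≥ 1, 0 ≤ u ≤ δ}`. -/
def RegionII (δ : ℝ) : Set Pt := {p | 1 ≤ p 0 ∧ 0 ≤ uuf p ∧ uuf p ≤ δ}

/-!
Along the straight line `s ↦ p - s L̲(p)` the direction `L̲` is unchanged, `ū` is constant and
`u`, `t` decrease at unit speed. Starting from `p` in the region, the line therefore reaches
`{u = 0}` or `{t = 1}` at `S = min(u, t - 1) ≤ δ` without leaving the region. At that point
`|ψ| ≤ C₀ δ ≤ C₀ δ M / ū` (on `{t = 1}` one has `ū ≤ 1 ≤ M`), and by the mean value theorem `ψ`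
changes along the segment by at most `S · M / ū ≤ δ M / ū`. So `C = C₀ + 1` works.
-/

open Set Filter Topology

lemma abs_sub_le_mul_of_abs_hasDerivAt_le {f f' : ℝ → ℝ} {a b K : ℝ} (hab : a ≤ b)
    (hf : ContinuousOn f (Icc a b)) (hf' : ∀ x ∈ Ioo a b, HasDerivAt f (f' x) x)
    (hK : ∀ x ∈ Ioo a b, |f' x| ≤ K) : |f b - f a| ≤ K * (b - a) := by
  rcases hab.eq_or_lt with rfl | hab
  · simp
  obtain ⟨c, hc, hslope⟩ := exists_hasDerivAt_eq_slope f f' hab hf hf'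
  rw [eq_div_iff (sub_pos.2 hab).ne'] at hslope
  rw [← hslope, abs_mul, abs_of_pos (sub_pos.2 hab)]
  exact mul_le_mul_of_nonneg_right (hK c hc) (sub_pos.2 hab).le

/-- The vector field `L̲ = ∂_t - ∂_r`. -/
def Lbvec (p : Pt) : Pt := Fin.cons 1 fun i => -om i p

lemma fderiv_Lbvec (f : Pt → ℝ) (p : Pt) : fderiv ℝ f p (Lbvec p) = Lbop f p := by
  have hdecomp : Lbvec p = Pi.single 0 1 - ∑ i : Fin 3, om i p • Pi.single i.succ 1 := by
    funext μ
    refine Fin.cases ?_ (fun j => ?_) μ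
    · simp [Lbvec, (Fin.succ_ne_zero _).symm]
    · simp [Lbvec, Pi.single_apply, Fin.succ_inj]
  simp only [hdecomp, map_sub, map_sum, map_smul, smul_eq_mul, Lbop, pdr, pd]

def Lbray (p : Pt) (s : ℝ) : Pt := p - s • Lbvec p

lemma Lbray_time (p : Pt) (s : ℝ) : Lbray p s 0 = p 0 - s := by
  simp [Lbray, Lbvec]

lemma Lbray_space (p : Pt) (s : ℝ) (i : Fin 3) :
    Lbray p s i.succ = (1 + s / rr p) * p i.succ := by
  simp [Lbray, Lbvec, om]
  ring

section Lbray

variable {p : Pt} {s : ℝ}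

lemma rr_Lbray (hr : 0 < rr p) (hs : 0 ≤ s) : rr (Lbray p s) = rr p + s := by
  have hscale : (0 : ℝ) ≤ 1 + s / rr p := by positivity
  calc rr (Lbray p s) = Real.sqrt ((1 + s / rr p) ^ 2 * ∑ i : Fin 3, p i.succ ^ 2) := by
        simp only [rr, Lbray_space, mul_pow, Finset.mul_sum]
    _ = (1 + s / rr p) * rr p := by rw [Real.sqrt_mul (sq_nonneg _), Real.sqrt_sq hscale]; rfl
    _ = rr p + s := by field_simp

lemma uuf_Lbray (hr : 0 < rr p) (hs : 0 ≤ s) : uuf (Lbray p s) = uuf p - s := by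
  simp only [uuf, Lbray_time, rr_Lbray hr hs]
  ring

lemma ubf_Lbray (hr : 0 < rr p) (hs : 0 ≤ s) : ubf (Lbray p s) = ubf p := by
  simp only [ubf, Lbray_time, rr_Lbray hr hs]
  ring

lemma Lbvec_Lbray (hr : 0 < rr p) (hs : 0 ≤ s) : Lbvec (Lbray p s) = Lbvec p := by
  have hpos : rr p + s ≠ 0 := by positivity
  simp only [Lbvec, om, Lbray_space, rr_Lbray hr hs]
  congr 2
  funext i
  field_simp

lemma hasDerivAt_comp_Lbray {ψ : Pt → ℝ} (hr : 0 < rr p) (hs : 0 ≤ s)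
    (hψ : DifferentiableAt ℝ ψ (Lbray p s)) :
    HasDerivAt (fun s => ψ (Lbray p s)) (-Lbop ψ (Lbray p s)) s := by
  have hray : HasDerivAt (Lbray p) (-Lbvec p) s := by
    show HasDerivAt (fun s => p - s • Lbvec p) _ s
    simpa using ((hasDerivAt_id s).smul_const (Lbvec p)).const_sub p
  have := hψ.hasFDerivAt.comp_hasDerivAt s hray
  rwa [map_neg, ← Lbvec_Lbray hr hs, fderiv_Lbvec] at this

end Lbray

/-- The parameter at which the ray `Lbray p` leaves `RegionII` through `{u = 0}` or `{t = 1}`. -/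
def exitTime (p : Pt) : ℝ := min (uuf p) (p 0 - 1)

section RegionII

variable {δ M : ℝ} {p : Pt} {s : ℝ} {ψ : Pt → ℝ}

lemma rr_pos_of_mem_RegionII (hδ : δ < 1 / 2) (hp : p ∈ RegionII δ) : 0 < rr p := by
  obtain ⟨ht, -, huδ⟩ := hp
  unfold uuf at huδ
  linarith

lemma ubf_pos_of_mem_RegionII (hp : p ∈ RegionII δ) : 0 < ubf p := by
  have := Real.sqrt_nonneg (∑ i : Fin 3, p i.succ ^ 2)
  unfold ubf rr
  linarith [hp.1]

lemma ubf_le_one_of_time_eq_one (ht : p 0 = 1) (hu : 0 ≤ uuf p) : ubf p ≤ 1 := by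
  unfold uuf at hu
  unfold ubf
  linarith

lemma RegionII_mem_nhds (ht : 1 < p 0) (hu : 0 < uuf p) (huδ : uuf p < δ) :
    RegionII δ ∈ 𝓝 p := by
  have hopen : IsOpen {q : Pt | 1 < q 0 ∧ 0 < uuf q ∧ uuf q < δ} := by
    have huuf : Continuous uuf := by
      unfold uuf rr
      fun_prop
    simp only [ofPred_and]
    exact (isOpen_lt continuous_const (continuous_apply 0)).inter
      ((isOpen_lt continuous_const huuf).inter (isOpen_lt huuf continuous_const))
  exact mem_of_superset (hopen.mem_nhds ⟨ht, hu, huδ⟩) fun q hq => ⟨hq.1.le, hq.2.1.le, hq.2.2.le⟩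

lemma Lbray_mem_RegionII (hr : 0 < rr p) (huδ : uuf p ≤ δ) (hs : s ∈ Icc 0 (exitTime p)) :
    Lbray p s ∈ RegionII δ := by
  have hu : s ≤ uuf p := hs.2.trans (min_le_left _ _)
  have ht : s ≤ p 0 - 1 := hs.2.trans (min_le_right _ _)
  refine ⟨?_, ?_, ?_⟩ <;> simp only [Lbray_time, uuf_Lbray hr hs.1] <;> linarith [hs.1]

lemma RegionII_mem_nhds_Lbray (hr : 0 < rr p) (huδ : uuf p ≤ δ) (hs : s ∈ Ioo 0 (exitTime p)) :
    RegionII δ ∈ 𝓝 (Lbray p s) := by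
  have hu : s < uuf p := hs.2.trans_le (min_le_left _ _)
  have ht : s < p 0 - 1 := hs.2.trans_le (min_le_right _ _)
  apply RegionII_mem_nhds <;> simp only [Lbray_time, uuf_Lbray hr hs.1.le] <;> linarith [hs.1]

/-- Along the ray, `ū` is constant, so the bound `|L̲ψ| ≤ M/ū` is a constant bound there. -/
lemma abs_sub_Lbray_exitTime_le (hr : 0 < rr p) (hp : p ∈ RegionII δ)
    (hψ : ContDiffOn ℝ 1 ψ (RegionII δ)) (hL : ∀ q ∈ RegionII δ, |Lbop ψ q| ≤ M / ubf q) :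
    |ψ p - ψ (Lbray p (exitTime p))| ≤ M / ubf p * exitTime p := by
  obtain ⟨ht, hu, huδ⟩ := hp
  have hexit : 0 ≤ exitTime p := le_min hu (by linarith)
  have hcont : ContinuousOn (fun s => ψ (Lbray p s)) (Icc 0 (exitTime p)) := by
    refine hψ.continuousOn.comp (Continuous.continuousOn ?_) fun s hs => Lbray_mem_RegionII hr huδ hs
    unfold Lbray
    fun_prop
  have hderiv (s) (hs : s ∈ Ioo 0 (exitTime p)) :
      HasDerivAt (fun s => ψ (Lbray p s)) (-Lbop ψ (Lbray p s)) s :=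
    hasDerivAt_comp_Lbray hr hs.1.le <|
      (hψ.contDiffAt (RegionII_mem_nhds_Lbray hr huδ hs)).differentiableAt one_ne_zero
  have hbound (s) (hs : s ∈ Ioo 0 (exitTime p)) : |-Lbop ψ (Lbray p s)| ≤ M / ubf p := by
    rw [abs_neg, ← ubf_Lbray hr hs.1.le]
    exact hL _ (Lbray_mem_RegionII hr huδ (Ioo_subset_Icc_self hs))
  rw [abs_sub_comm]
  simpa [Lbray] using abs_sub_le_mul_of_abs_hasDerivAt_le hexit hcont hderiv hbound

lemma abs_Lbray_exitTime_le {C₀ : ℝ} (hC₀ : 0 ≤ C₀) (hδ : 0 < δ) (hM : 1 ≤ M) (hr : 0 < rr p)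
    (hp : p ∈ RegionII δ) (hzero : ∀ q ∈ RegionII δ, uuf q = 0 → ψ q = 0)
    (hinit : ∀ q ∈ RegionII δ, q 0 = 1 → |ψ q| ≤ C₀ * δ) :
    |ψ (Lbray p (exitTime p))| ≤ C₀ * δ * (M / ubf p) := by
  have hub := ubf_pos_of_mem_RegionII hp
  obtain ⟨ht, hu, huδ⟩ := hp
  have hexit : 0 ≤ exitTime p := le_min hu (by linarith)
  have hmem := Lbray_mem_RegionII hr huδ ⟨hexit, le_rfl⟩
  rcases le_total (uuf p) (p 0 - 1) with h | h
  · have hψ0 := hzero _ hmem (by rw [uuf_Lbray hr hexit, exitTime, min_eq_left h, sub_self])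
    rw [hψ0, abs_zero]
    positivity
  · have htime : Lbray p (exitTime p) 0 = 1 := by rw [Lbray_time, exitTime, min_eq_right h]; ring
    have hub1 : ubf p ≤ 1 := ubf_Lbray hr hexit ▸ ubf_le_one_of_time_eq_one htime hmem.2.1
    calc |ψ (Lbray p (exitTime p))| ≤ C₀ * δ := hinit _ hmem htime
      _ ≤ C₀ * δ * (M / ubf p) :=
        le_mul_of_one_le_right (by positivity) ((one_le_div hub).2 (hub1.trans hM))

end RegionII

/-- a `C¹` function on the short-pulse region that vanishes on
the outer cone `{u = 0}`, is `O(δ)` on the initial slice `{t = 1}`, and whose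
incoming derivative satisfies `|L̲ψ| ≤ M/ū`, satisfies `|ψ| ≤ C·δ·M/ū` with `C`
depending only on `C₀`. -/
theorem smallness_from_incoming_derivative_decay (C₀ : ℝ) (hC₀ : 0 ≤ C₀) :
    ∃ C : ℝ, ∀ δ M : ℝ, δ ∈ Set.Ioo (0:ℝ) (1/2) → 1 ≤ M →
      ∀ ψ : Pt → ℝ, ContDiffOn ℝ 1 ψ (RegionII δ) →
        (∀ p ∈ RegionII δ, uuf p = 0 → ψ p = 0) →
        (∀ p ∈ RegionII δ, p 0 = 1 → |ψ p| ≤ C₀ * δ) →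
        (∀ p ∈ RegionII δ, |Lbop ψ p| ≤ M / ubf p) →
        ∀ p ∈ RegionII δ, |ψ p| ≤ C * δ * M / ubf p := by
  refine ⟨C₀ + 1, fun δ M ⟨hδ, hδ'⟩ hM ψ hψ hzero hinit hL p hp => ?_⟩
  have hr := rr_pos_of_mem_RegionII hδ' hp
  have hexit := abs_Lbray_exitTime_le hC₀ hδ hM hr hp hzero hinit
  have hmvt := abs_sub_Lbray_exitTime_le hr hp hψ hL
  have hS : exitTime p ≤ δ := (min_le_left _ _).trans hp.2.2
  have hMub : 0 ≤ M / ubf p := div_nonneg (by linarith) (ubf_pos_of_mem_RegionII hp).le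
  calc |ψ p| ≤ |ψ (Lbray p (exitTime p))| + |ψ p - ψ (Lbray p (exitTime p))| :=
        sub_le_iff_le_add'.1 (abs_sub_abs_le_abs_sub _ _)
    _ ≤ C₀ * δ * (M / ubf p) + M / ubf p * δ :=
        add_le_add hexit (hmvt.trans (mul_le_mul_of_nonneg_left hS hMub))
    _ = (C₀ + 1) * δ * M / ubf p := by ring
end
end

section
/- Let (k^{αβ})_{0≤α,β≤3} be real numbers with k^{αβ} = k^{βα}, and let ψ : ℝ^{1+3} → ℝ be C². At every point with r > 0: Σ_{α,β=0}^3 k^{αβ}·∂_α∂_βψ = k_{L̲L̲}·L(Lψ) + 2k_{LL̲}·L(L̲ψ) + k_{LL}·L̲(L̲ψ) + Σ_{i,j=1}^3 k^{ij}·∂̄_i(∂̄_jψ) + Σ_{i=1}^3 k_{L̲}^{i}·L(∂̄_iψ) + Σ_{i=1}^3 k_{L}^{i}·L̲(∂̄_iψ) + (1/(2r))·tr̄k·(Lψ − L̲ψ) + (1/r)·Σ_{i,j=1}^3 k^{ij}ω_j·∂̄_iψ, where k_{L̲L̲} = (1/4)k^{00} + (1/2)Σ_i k^{0i}ω_i +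 (1/4)Σ_{i,j}k^{ij}ω_iω_j, k_{LL̲} = (1/4)(k^{00} − Σ_{i,j}k^{ij}ω_iω_j), k_{LL} = (1/4)k^{00} − (1/2)Σ_i k^{0i}ω_i + (1/4)Σ_{i,j}k^{ij}ω_iω_j, k_{L̲}^{i} = k^{0i} + Σ_j k^{ij}ω_j, k_{L}^{i} = k^{0i} − Σ_j k^{ij}ω_j, and tr̄k = Σ_{i,j}(δ_{ij} − ω_iω_j)k^{ij}. -/
/-!
The coordinate vectors decompose along the null frame as `∂_t = (L + L̲)/2` and
`∂_i = ∂̄_i + (ω_i/2)(L - L̲)`, so by bilinearity and the symmetry of `k` and of the Hessian,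
`Σ k^{αβ} ∂_α∂_β ψ` is the expansion of the Hessian in the frame `L, L̲, ∂̄_i`. For vector fields
`X, Y`, the composite `X(Yψ)` is `∇²ψ(X, Y)` plus `dψ` applied to the derivative of `Y` along `X`.
The frame fields depend on `x` only through `ω`, and `ω` is constant along `L` and `L̲` because
`|ω| = 1`; so every composite involving `L` or `L̲` is a pure Hessian term. Only `∂̄_i(∂̄_j ψ)` picks
up first-order terms, from `∂̄_i ω_j = (δ_ij - ω_i ω_j)/r`, and these are the last two terms of the
identity.
-/
noncomputable section

open Real MeasureTheory

theorem bilinForm_null_frame_decomposition {E : Type*} [AddCommGroup E] [Module ℝ E]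
    (B : LinearMap.BilinForm ℝ E) (hB : ∀ u v, B u v = B v u)
    (k : Fin 4 → Fin 4 → ℝ) (hk : ∀ α β, k α β = k β α)
    (f : Fin 4 → E) (l lb : E) (e : Fin 3 → E) (ω : Fin 3 → ℝ)
    (hf₀ : f 0 = (1 / 2 : ℝ) • (l + lb)) (hf : ∀ i, f i.succ = e i + (ω i / 2) • (l - lb)) :
    ∑ α, ∑ β, k α β * B (f α) (f β)
      = ((1/4) * k 0 0 + (1/2) * ∑ i, k 0 i.succ * ω i
            + (1/4) * ∑ i, ∑ j, k i.succ j.succ * ω i * ω j) * B l l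
        + 2 * ((1/4) * (k 0 0 - ∑ i, ∑ j, k i.succ j.succ * ω i * ω j)) * B l lb
        + ((1/4) * k 0 0 - (1/2) * ∑ i, k 0 i.succ * ω i
            + (1/4) * ∑ i, ∑ j, k i.succ j.succ * ω i * ω j) * B lb lb
        + ∑ i, ∑ j, k i.succ j.succ * B (e i) (e j)
        + ∑ i, (k 0 i.succ + ∑ j, k i.succ j.succ * ω j) * B l (e i)
        + ∑ i, (k 0 i.succ - ∑ j, k i.succ j.succ * ω j) * B lb (e i) := by
  have hlbl : B lb l = B l lb := hB _ _
  have hel : ∀ i, B (e i) l = B l (e i) := fun i => hB _ _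
  have helb : ∀ i, B (e i) lb = B lb (e i) := fun i => hB _ _
  simp only [Fin.sum_univ_succ (n := 3), hf₀, hf, map_add, map_sub, map_smul,
    LinearMap.add_apply, LinearMap.sub_apply, LinearMap.smul_apply, smul_eq_mul,
    Fin.sum_univ_three, hlbl, hel, helb]
  simp only [Fin.succ_zero_eq_one, Fin.succ_one_eq_two, show (2 : Fin 3).succ = 3 from rfl]
  rw [hk 1 0, hk 2 0, hk 3 0, hk 2 1, hk 3 1, hk 3 2]
  ring

theorem fderiv_fderiv_apply_field {E : Type*} [NormedAddCommGroup E] [NormedSpace ℝ E]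
    {ψ : E → ℝ} {W : E → E} {p : E}
    (hψ : DifferentiableAt ℝ (fderiv ℝ ψ) p) (hW : DifferentiableAt ℝ W p) (v : E) :
    fderiv ℝ (fun q => fderiv ℝ ψ q (W q)) p v
      = fderiv ℝ (fderiv ℝ ψ) p v (W p) + fderiv ℝ ψ p (fderiv ℝ W p v) := by
  rw [fderiv_clm_apply hψ hW]
  simp only [add_apply, ContinuousLinearMap.coe_comp, Function.comp_apply,
    ContinuousLinearMap.flip_apply]
  ring

theorem mkPt_eq_sum (t : ℝ) (x : Sp) :
    mkPt t x = t • Pi.single 0 1 + ∑ i, x i • Pi.single i.succ 1 := by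
  ext μ
  cases μ using Fin.cases <;> simp [mkPt, Pi.single_apply]

theorem clm_apply_mkPt (A : Pt →L[ℝ] ℝ) (t : ℝ) (x : Sp) :
    A (mkPt t x) = t * A (Pi.single 0 1) + ∑ i, x i * A (Pi.single i.succ 1) := by
  simp [mkPt_eq_sum]

def spatialEmbedding : Sp →L[ℝ] Pt := (0 : Sp →L[ℝ] ℝ).finCons (.id ℝ Sp)

theorem spatialEmbedding_apply (x : Sp) : spatialEmbedding x = mkPt 0 x := rfl

theorem HasFDerivAt.mkPt {E : Type*} [NormedAddCommGroup E] [NormedSpace ℝ E]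
    {X : E → Sp} {X' : E →L[ℝ] Sp} {p : E} (hX : HasFDerivAt X X' p) (t : ℝ) :
    HasFDerivAt (fun q => mkPt t (X q)) (spatialEmbedding ∘L X') p :=
  ((hasFDerivAt_const t p).finCons hX).congr_fderiv (by ext; rfl)

def spatialPart : Pt →L[ℝ] Sp := ContinuousLinearMap.pi fun i => ContinuousLinearMap.proj i.succ

def unitRadial (q : Pt) : Sp := fun i => om i q

theorem unitRadial_apply (q : Pt) (i : Fin 3) : unitRadial q i = om i q := rfl

def nullL (q : Pt) : Pt := mkPt 1 (unitRadial q)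

def nullLb (q : Pt) : Pt := mkPt 1 (-unitRadial q)

def angularField (i : Fin 3) (q : Pt) : Pt := mkPt 0 (Pi.single i 1 - om i q • unitRadial q)

theorem pdr_eq_fderiv (f : Pt → ℝ) (q : Pt) :
    pdr f q = fderiv ℝ f q (spatialEmbedding (unitRadial q)) := by
  simp [spatialEmbedding_apply, clm_apply_mkPt, pdr, pd, unitRadial]

theorem Lop_eq_fderiv (f : Pt → ℝ) (q : Pt) : Lop f q = fderiv ℝ f q (nullL q) := by
  simp [clm_apply_mkPt, Lop, pdr, pd, unitRadial, nullL]

theorem Lbop_eq_fderiv (f : Pt → ℝ) (q : Pt) : Lbop f q = fderiv ℝ f q (nullLb q) := by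
  simp [clm_apply_mkPt, Lbop, pdr, pd, unitRadial, nullLb, sub_eq_add_neg]

theorem pbar_eq_fderiv (i : Fin 3) (f : Pt → ℝ) (q : Pt) :
    pbar i f q = fderiv ℝ f q (angularField i q) := by
  simp [clm_apply_mkPt, pbar, pdr, pd, unitRadial, angularField, sub_mul, Finset.sum_sub_distrib,
    Pi.single_apply, Finset.mul_sum, mul_assoc]

theorem single_zero_eq_nullL_add_nullLb (p : Pt) :
    (Pi.single 0 1 : Pt) = (1 / 2 : ℝ) • (nullL p + nullLb p) := by
  ext μ
  cases μ using Fin.cases <;> norm_num [nullL, nullLb, mkPt]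

theorem single_succ_eq_angularField_add (p : Pt) (i : Fin 3) :
    (Pi.single i.succ 1 : Pt) = angularField i p + (om i p / 2) • (nullL p - nullLb p) := by
  ext μ
  cases μ using Fin.cases with
  | zero => simp [nullL, nullLb, angularField, mkPt]
  | succ j =>
    simp only [Pi.single_apply, Fin.succ_inj, angularField, mkPt, nullL, nullLb, Pi.add_apply,
      Fin.cons_succ, Pi.sub_apply, Pi.smul_apply, smul_eq_mul, Pi.neg_apply]
    ring

theorem rr_sq (p : Pt) : rr p ^ 2 = ∑ i : Fin 3, p i.succ ^ 2 :=
  Real.sq_sqrt (by positivity)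

theorem unitRadial_dotProduct_self {p : Pt} (hp : 0 < rr p) :
    unitRadial p ⬝ᵥ unitRadial p = 1 := by
  simp only [dotProduct, unitRadial, om, ← sq, div_pow, ← Finset.sum_div, ← rr_sq]
  exact div_self (pow_ne_zero 2 hp.ne')

theorem hasFDerivAt_rr {p : Pt} (hp : 0 < rr p) :
    HasFDerivAt rr
      ((rr p)⁻¹ • ∑ i : Fin 3, p i.succ • (ContinuousLinearMap.proj i.succ : Pt →L[ℝ] ℝ)) p := by
  have hS : HasFDerivAt (fun q : Pt => ∑ i : Fin 3, q i.succ ^ 2)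
      (∑ i : Fin 3, (2 * p i.succ) • (ContinuousLinearMap.proj i.succ : Pt →L[ℝ] ℝ)) p :=
    HasFDerivAt.fun_sum fun i _ => by
      simpa using ((ContinuousLinearMap.proj i.succ : Pt →L[ℝ] ℝ).hasFDerivAt (x := p)).pow 2
  have hS₀ : ∑ i : Fin 3, p i.succ ^ 2 ≠ 0 := by rw [← rr_sq]; positivity
  refine (hS.sqrt hS₀).congr_fderiv ?_
  ext v
  simp only [smul_apply, sum_apply, ContinuousLinearMap.proj_apply, smul_eq_mul, Finset.mul_sum]
  refine Finset.sum_congr rfl fun i _ => ?_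
  rw [rr]
  ring

theorem unitRadial_eq_inv_rr_smul_spatialPart :
    unitRadial = fun q => (rr q)⁻¹ • spatialPart q := by
  ext q i
  simp [unitRadial, om, spatialPart, div_eq_inv_mul]

theorem hasFDerivAt_unitRadial {p : Pt} (hp : 0 < rr p) :
    HasFDerivAt unitRadial ((rr p)⁻¹ • spatialPart
      + ((-(rr p ^ 2)⁻¹) • (rr p)⁻¹
          • ∑ i : Fin 3, p i.succ • (ContinuousLinearMap.proj i.succ : Pt →L[ℝ] ℝ)).smulRight
        (spatialPart p)) p := by
  rw [unitRadial_eq_inv_rr_smul_spatialPart]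
  exact ((hasDerivAt_inv hp.ne').comp_hasFDerivAt p (hasFDerivAt_rr hp)).smul
    spatialPart.hasFDerivAt

theorem differentiableAt_unitRadial {p : Pt} (hp : 0 < rr p) : DifferentiableAt ℝ unitRadial p :=
  (hasFDerivAt_unitRadial hp).differentiableAt

theorem fderiv_unitRadial_mkPt {p : Pt} (hp : 0 < rr p) (t : ℝ) (x : Sp) :
    fderiv ℝ unitRadial p (mkPt t x)
      = (rr p)⁻¹ • (x - (unitRadial p ⬝ᵥ x) • unitRadial p) := by
  rw [(hasFDerivAt_unitRadial hp).fderiv]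
  ext i
  simp only [spatialPart, ContinuousLinearMap.coe_pi', ContinuousLinearMap.proj_apply, mkPt,
    add_apply, smul_apply, Fin.cons_succ, ContinuousLinearMap.smulRight_apply, sum_apply,
    smul_eq_mul, Pi.add_apply, Pi.smul_apply, Pi.sub_apply, dotProduct, unitRadial, om]
  field_simp
  rw [← Finset.sum_div]
  field_simp
  ring

theorem fderiv_unitRadial_nullL {p : Pt} (hp : 0 < rr p) :
    fderiv ℝ unitRadial p (nullL p) = 0 := by
  rw [nullL, fderiv_unitRadial_mkPt hp, unitRadial_dotProduct_self hp, one_smul, sub_self,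
    smul_zero]

theorem fderiv_unitRadial_nullLb {p : Pt} (hp : 0 < rr p) :
    fderiv ℝ unitRadial p (nullLb p) = 0 := by
  rw [nullLb, fderiv_unitRadial_mkPt hp, dotProduct_neg, unitRadial_dotProduct_self hp, neg_smul,
    one_smul, sub_neg_eq_add, neg_add_cancel, smul_zero]

theorem fderiv_unitRadial_angularField {p : Pt} (hp : 0 < rr p) (i : Fin 3) :
    fderiv ℝ unitRadial p (angularField i p)
      = (rr p)⁻¹ • (Pi.single i 1 - om i p • unitRadial p) := by
  have h : unitRadial p ⬝ᵥ (Pi.single i 1 - om i p • unitRadial p) = 0 := by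
    rw [dotProduct_sub, dotProduct_smul, unitRadial_dotProduct_self hp, dotProduct_single,
      smul_eq_mul, mul_one, mul_one, unitRadial, sub_self]
  rw [angularField, fderiv_unitRadial_mkPt hp, h, zero_smul, sub_zero]

theorem hasFDerivAt_single_sub_om_smul_unitRadial {p : Pt} (hp : 0 < rr p) (i : Fin 3) :
    HasFDerivAt (fun q => Pi.single i 1 - om i q • unitRadial q)
      (-(om i p • fderiv ℝ unitRadial p
        + (ContinuousLinearMap.proj i ∘L fderiv ℝ unitRadial p).smulRight (unitRadial p))) p := by
  have hω := (differentiableAt_unitRadial hp).hasFDerivAt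
  have hωi : HasFDerivAt (fun q => unitRadial q i)
      (ContinuousLinearMap.proj i ∘L fderiv ℝ unitRadial p) p :=
    (ContinuousLinearMap.proj (R := ℝ) (φ := fun _ : Fin 3 => ℝ) i).hasFDerivAt.comp p hω
  exact (hωi.smul hω).const_sub (Pi.single i 1)

section SecondDerivatives

variable {ψ : Pt → ℝ} {p : Pt}

theorem fderiv_fderiv_apply_mkPt (hψ : DifferentiableAt ℝ (fderiv ℝ ψ) p)
    {X : Pt → Sp} {X' : Pt →L[ℝ] Sp} (hX : HasFDerivAt X X' p) (t : ℝ) (v : Pt) :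
    fderiv ℝ (fun q => fderiv ℝ ψ q (mkPt t (X q))) p v
      = fderiv ℝ (fderiv ℝ ψ) p v (mkPt t (X p)) + fderiv ℝ ψ p (spatialEmbedding (X' v)) := by
  rw [fderiv_fderiv_apply_field hψ (hX.mkPt t).differentiableAt, (hX.mkPt t).fderiv]
  rfl

theorem fderiv_fderiv_apply_mkPt_of_eq_zero (hψ : DifferentiableAt ℝ (fderiv ℝ ψ) p)
    {X : Pt → Sp} {X' : Pt →L[ℝ] Sp} (hX : HasFDerivAt X X' p) (t : ℝ) {v : Pt}
    (hv : X' v = 0) :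
    fderiv ℝ (fun q => fderiv ℝ ψ q (mkPt t (X q))) p v
      = fderiv ℝ (fderiv ℝ ψ) p v (mkPt t (X p)) := by
  rw [fderiv_fderiv_apply_mkPt hψ hX, hv, map_zero, map_zero, add_zero]

theorem pd_pd_eq (hψ : DifferentiableAt ℝ (fderiv ℝ ψ) p) (α β : Fin 4) :
    pd α (pd β ψ) p = fderiv ℝ (fderiv ℝ ψ) p (Pi.single α 1) (Pi.single β 1) := by
  refine (fderiv_fderiv_apply_field hψ (differentiableAt_const (Pi.single β 1)) _).trans ?_
  simp

theorem Lop_Lop_eq (hψ : DifferentiableAt ℝ (fderiv ℝ ψ) p) (hp : 0 < rr p) :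
    Lop (Lop ψ) p = fderiv ℝ (fderiv ℝ ψ) p (nullL p) (nullL p) := by
  rw [Lop_eq_fderiv, funext (Lop_eq_fderiv ψ)]
  exact fderiv_fderiv_apply_mkPt_of_eq_zero hψ (differentiableAt_unitRadial hp).hasFDerivAt 1
    (fderiv_unitRadial_nullL hp)

theorem Lop_Lbop_eq (hψ : DifferentiableAt ℝ (fderiv ℝ ψ) p) (hp : 0 < rr p) :
    Lop (Lbop ψ) p = fderiv ℝ (fderiv ℝ ψ) p (nullL p) (nullLb p) := by
  rw [Lop_eq_fderiv, funext (Lbop_eq_fderiv ψ)]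
  refine fderiv_fderiv_apply_mkPt_of_eq_zero hψ
    (differentiableAt_unitRadial hp).hasFDerivAt.neg 1 ?_
  rw [neg_apply, fderiv_unitRadial_nullL hp, neg_zero]

theorem Lbop_Lbop_eq (hψ : DifferentiableAt ℝ (fderiv ℝ ψ) p) (hp : 0 < rr p) :
    Lbop (Lbop ψ) p = fderiv ℝ (fderiv ℝ ψ) p (nullLb p) (nullLb p) := by
  rw [Lbop_eq_fderiv, funext (Lbop_eq_fderiv ψ)]
  refine fderiv_fderiv_apply_mkPt_of_eq_zero hψ
    (differentiableAt_unitRadial hp).hasFDerivAt.neg 1 ?_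
  rw [neg_apply, fderiv_unitRadial_nullLb hp, neg_zero]

theorem Lop_pbar_eq (hψ : DifferentiableAt ℝ (fderiv ℝ ψ) p) (hp : 0 < rr p) (i : Fin 3) :
    Lop (pbar i ψ) p = fderiv ℝ (fderiv ℝ ψ) p (nullL p) (angularField i p) := by
  rw [Lop_eq_fderiv, funext (pbar_eq_fderiv i ψ)]
  refine fderiv_fderiv_apply_mkPt_of_eq_zero hψ
    (hasFDerivAt_single_sub_om_smul_unitRadial hp i) 0 ?_
  simp [fderiv_unitRadial_nullL hp]

theorem Lbop_pbar_eq (hψ : DifferentiableAt ℝ (fderiv ℝ ψ) p) (hp : 0 < rr p) (i : Fin 3) :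
    Lbop (pbar i ψ) p = fderiv ℝ (fderiv ℝ ψ) p (nullLb p) (angularField i p) := by
  rw [Lbop_eq_fderiv, funext (pbar_eq_fderiv i ψ)]
  refine fderiv_fderiv_apply_mkPt_of_eq_zero hψ
    (hasFDerivAt_single_sub_om_smul_unitRadial hp i) 0 ?_
  simp [fderiv_unitRadial_nullLb hp]

theorem pbar_pbar_eq (hψ : DifferentiableAt ℝ (fderiv ℝ ψ) p) (hp : 0 < rr p) (i j : Fin 3) :
    pbar i (pbar j ψ) p = fderiv ℝ (fderiv ℝ ψ) p (angularField i p) (angularField j p)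
      - (rr p)⁻¹ * (((if i = j then 1 else 0) - om i p * om j p) * pdr ψ p
        + om j p * pbar i ψ p) := by
  rw [pbar_eq_fderiv, funext (pbar_eq_fderiv j ψ)]
  refine (fderiv_fderiv_apply_mkPt hψ (hasFDerivAt_single_sub_om_smul_unitRadial hp j) 0 _).trans
    ?_
  rw [sub_eq_add_neg]
  congr 1
  simp only [neg_apply, add_apply, smul_apply, ContinuousLinearMap.smulRight_apply,
    ContinuousLinearMap.comp_apply, ContinuousLinearMap.proj_apply,
    fderiv_unitRadial_angularField hp]
  have hδ : (Pi.single i 1 : Sp) j = if i = j then 1 else 0 := by simp [Pi.single_apply, eq_comm]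
  rw [pdr_eq_fderiv, pbar_eq_fderiv, angularField, ← spatialEmbedding_apply]
  simp only [map_neg, map_add, map_sub, map_smul, smul_eq_mul, Pi.sub_apply, Pi.smul_apply, hδ,
    unitRadial_apply]
  ring

theorem sum_mul_pbar_pbar_eq (hψ : DifferentiableAt ℝ (fderiv ℝ ψ) p) (hp : 0 < rr p)
    (a : Fin 3 → Fin 3 → ℝ) :
    ∑ i, ∑ j, a i j * pbar i (pbar j ψ) p
      = ∑ i, ∑ j, a i j * fderiv ℝ (fderiv ℝ ψ) p (angularField i p) (angularField j p)
        - (1 / (2 * rr p)) * (∑ i, ∑ j, ((if i = j then (1:ℝ) else 0) - om i p * om j p) * a i j)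
            * (Lop ψ p - Lbop ψ p)
        - (1 / rr p) * ∑ i, ∑ j, a i j * om j p * pbar i ψ p := by
  have hL : Lop ψ p - Lbop ψ p = 2 * pdr ψ p := by simp only [Lop, Lbop]; ring
  calc ∑ i, ∑ j, a i j * pbar i (pbar j ψ) p
      = ∑ i, ∑ j, (a i j * fderiv ℝ (fderiv ℝ ψ) p (angularField i p) (angularField j p)
          - (1 / (2 * rr p)) * (((if i = j then (1:ℝ) else 0) - om i p * om j p) * a i j)
              * (Lop ψ p - Lbop ψ p)
          - (1 / rr p) * (a i j * om j p * pbar i ψ p)) := by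
        refine Fintype.sum_congr _ _ fun i => Fintype.sum_congr _ _ fun j => ?_
        rw [pbar_pbar_eq hψ hp, hL]
        field_simp
        ring
    _ = _ := by simp only [Finset.sum_sub_distrib, ← Finset.sum_mul, ← Finset.mul_sum]

end SecondDerivatives

/-- null-frame decomposition of a constant-coefficient symmetric
second-order operator `Σ_{α,β} k^{αβ} ∂_α∂_β ψ`. -/
theorem symmetric_tensor_null_frame_decomposition
    (k : Fin 4 → Fin 4 → ℝ) (hsymm : ∀ α β, k α β = k β α)
    (ψ : Pt → ℝ) (hψ : ContDiff ℝ 2 ψ) :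
    ∀ p : Pt, 0 < rr p →
      ∑ α : Fin 4, ∑ β : Fin 4, k α β * pd α (pd β ψ) p
        = ((1/4) * k 0 0 + (1/2) * ∑ i : Fin 3, k 0 i.succ * om i p
            + (1/4) * ∑ i : Fin 3, ∑ j : Fin 3, k i.succ j.succ * om i p * om j p)
              * Lop (Lop ψ) p
          + 2 * ((1/4) * (k 0 0 - ∑ i : Fin 3, ∑ j : Fin 3, k i.succ j.succ * om i p * om j p))
              * Lop (Lbop ψ) p
          + ((1/4) * k 0 0 - (1/2) * ∑ i : Fin 3, k 0 i.succ * om i p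
            + (1/4) * ∑ i : Fin 3, ∑ j : Fin 3, k i.succ j.succ * om i p * om j p)
              * Lbop (Lbop ψ) p
          + (∑ i : Fin 3, ∑ j : Fin 3, k i.succ j.succ * pbar i (pbar j ψ) p)
          + (∑ i : Fin 3, (k 0 i.succ + ∑ j : Fin 3, k i.succ j.succ * om j p)
              * Lop (pbar i ψ) p)
          + (∑ i : Fin 3, (k 0 i.succ - ∑ j : Fin 3, k i.succ j.succ * om j p)
              * Lbop (pbar i ψ) p)
          + (1 / (2 * rr p))
            * (∑ i : Fin 3, ∑ j : Fin 3,
                ((if i = j then (1:ℝ) else 0) - om i p * om j p) * k i.succ j.succ)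
            * (Lop ψ p - Lbop ψ p)
          + (1 / rr p) * ∑ i : Fin 3, ∑ j : Fin 3, k i.succ j.succ * om j p * pbar i ψ p := by
  intro p hp
  have hψ₂ : DifferentiableAt ℝ (fderiv ℝ ψ) p :=
    (hψ.fderiv_right (m := 1) le_rfl).differentiable one_ne_zero p
  have hH : ∀ u v, fderiv ℝ (fderiv ℝ ψ) p u v = fderiv ℝ (fderiv ℝ ψ) p v u :=
    hψ.contDiffAt.isSymmSndFDerivAt (by simp)
  have hframe := bilinForm_null_frame_decomposition (fderiv ℝ (fderiv ℝ ψ) p).toBilinForm hH k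
    hsymm (fun μ => Pi.single μ 1) (nullL p) (nullLb p) (fun i => angularField i p)
    (fun i => om i p) (single_zero_eq_nullL_add_nullLb p) (single_succ_eq_angularField_add p)
  simp only [ContinuousLinearMap.toBilinForm_apply] at hframe
  simp only [pd_pd_eq hψ₂, Lop_Lop_eq hψ₂ hp, Lop_Lbop_eq hψ₂ hp, Lbop_Lbop_eq hψ₂ hp,
    Lop_pbar_eq hψ₂ hp, Lbop_pbar_eq hψ₂ hp, sum_mul_pbar_pbar_eq hψ₂ hp, hframe]
  ring
end
end
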